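/- Let x ∈ ℝ^n be an irreducible score. Set C_1 = {L ∈ ℝ_+^{n×n} : each row of L sums to 1}, C_2 = {L ∈ ℝ_+^{n×n} : each column of L sums to 1}, C_3 = {L ∈ ℝ_+^{n×n} : ∑_{j=1}^n (j−1) l_{ij} = x_i for all i}, and C = C_1 ∩ C_2 ∩ C_3. For matrices L ∈ ℝ_+^{n×n} and M ∈ (0,∞)^{n×n} let D(L,M) = ∑_{i,j} [l_{ij} log l_{ij} − l_{ij} log m_{ij} − l_{ij} + m_{ij}] (with 0 log 0 = 0). Define M⁰ to be the all-ones matrix and, recursively for k ≥ 1, M^k to be the unique minimizer of L ↦ D(L, M^{k−1}) over C_{k mod 3} (where C_0 := C_3). Then the sequence (M^k) converges, as k → ∞, to the unique minimizer of H(L) = ∑_{i,j} l_{ij} log l_{ij} over C. -/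

import Mathlib

open Finset Filter

/-- Matrices with nonnegative entries whose rows sum to 1. -/
def sinkC1 (n : ℕ) : Set (Fin n → Fin n → ℝ) :=
  {L | (∀ i j, 0 ≤ L i j) ∧ ∀ i, ∑ j, L i j = 1}

/-- Matrices with nonnegative entries whose columns sum to 1. -/
def sinkC2 (n : ℕ) : Set (Fin n → Fin n → ℝ) :=
  {L | (∀ i j, 0 ≤ L i j) ∧ ∀ j, ∑ i, L i j = 1}

/-- Matrices with nonnegative entries whose rows have barycenters `x_i`. -/
def sinkC3 (n : ℕ) (x : Fin n → ℝ) : Set (Fin n → Fin n → ℝ) :=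
  {L | (∀ i j, 0 ≤ L i j) ∧ ∀ i, ∑ j : Fin n, ((j : ℕ) : ℝ) * L i j = x i}

/-- The cyclic choice of constraint set: `C_k := C_{k mod 3}` with `C_0 := C_3`. -/
def sinkCk (n : ℕ) (x : Fin n → ℝ) (k : ℕ) : Set (Fin n → Fin n → ℝ) :=
  if k % 3 = 1 then sinkC1 n else if k % 3 = 2 then sinkC2 n else sinkC3 n x

/-- Bregman's divergence associated with the entropy. -/
noncomputable def bregmanD (n : ℕ) (L M : Fin n → Fin n → ℝ) : ℝ :=
  ∑ i, ∑ j, (L i j * Real.log (L i j) - L i j * Real.log (M i j) - L i j + M i j)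

/-- The entropy `H(L) = ∑_{i,j} l_{ij} log l_{ij}` (note `Real.log 0 = 0`). -/
noncomputable def entropyH (n : ℕ) (L : Fin n → Fin n → ℝ) : ℝ :=
  ∑ i, ∑ j, L i j * Real.log (L i j)


noncomputable def phiB (l m : ℝ) : ℝ := l * Real.log l - l * Real.log m - l + m

lemma phiB_self (l : ℝ) : phiB l l = 0 := by simp [phiB]

lemma phiB_zero_left (m : ℝ) : phiB 0 m = m := by simp [phiB]

/-- Hellinger-type lower bound. -/
lemma sq_sqrt_sub_le_phiB {l m : ℝ} (hl : 0 ≤ l) (hm : 0 < m) :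
    (Real.sqrt l - Real.sqrt m) ^ 2 ≤ phiB l m := by
  rcases eq_or_lt_of_le hl with h | hl
  · rw [← h, phiB_zero_left]
    simp [Real.sq_sqrt hm.le]
  · set u := Real.sqrt l with hu
    set v := Real.sqrt m with hv
    have hu0 : 0 < u := Real.sqrt_pos.2 hl
    have hv0 : 0 < v := Real.sqrt_pos.2 hm
    have hl2 : l = u ^ 2 := (Real.sq_sqrt hl.le).symm
    have hm2 : m = v ^ 2 := (Real.sq_sqrt hm.le).symm
    have hlogl : Real.log l = 2 * Real.log u := by
      rw [hl2, Real.log_pow]; push_cast; ring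
    have hlogm : Real.log m = 2 * Real.log v := by
      rw [hm2, Real.log_pow]; push_cast; ring
    have key : Real.log v - Real.log u ≤ v / u - 1 := by
      have := Real.log_le_sub_one_of_pos (x := v / u) (by positivity)
      rwa [Real.log_div hv0.ne' hu0.ne'] at this
    have key2 : 2 * u ^ 2 - 2 * u * v ≤ 2 * u ^ 2 * (Real.log u - Real.log v) := by
      have h1 : 1 - v / u ≤ Real.log u - Real.log v := by linarith
      have h2 : 2 * u ^ 2 * (1 - v / u) ≤ 2 * u ^ 2 * (Real.log u - Real.log v) := by
        apply mul_le_mul_of_nonneg_left h1 (by positivity)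
      have h3 : 2 * u ^ 2 * (1 - v / u) = 2 * u ^ 2 - 2 * u * v := by
        field_simp
      linarith
    rw [phiB, hlogl, hlogm, hl2, hm2]
    nlinarith

lemma phiB_nonneg {l m : ℝ} (hl : 0 ≤ l) (hm : 0 < m) : 0 ≤ phiB l m :=
  le_trans (sq_nonneg _) (sq_sqrt_sub_le_phiB hl hm)

lemma mul_log_ge {l : ℝ} (hl : 0 ≤ l) : l - 1 ≤ l * Real.log l := by
  rcases eq_or_lt_of_le hl with h | hl
  · simp [← h]
  · have := Real.log_le_sub_one_of_pos (x := 1 / l) (by positivity)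
    rw [Real.log_div one_ne_zero hl.ne', Real.log_one] at this
    have h2 : 1 - 1 / l ≤ Real.log l := by linarith
    have h3 : l * (1 - 1 / l) ≤ l * Real.log l := mul_le_mul_of_nonneg_left h2 hl.le
    have h4 : l * (1 - 1 / l) = l - 1 := by field_simp
    linarith

/-- Bound on `m` from a bound on `phiB l m`, when `0 ≤ l ≤ 1`. -/
lemma le_of_phiB_le {l m B : ℝ} (hl : 0 ≤ l) (hl1 : l ≤ 1) (hm : 0 < m)
    (h : phiB l m ≤ B) : m ≤ (1 + Real.sqrt (B + 3)) ^ 2 := by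
  have hB : 0 ≤ B := le_trans (phiB_nonneg hl hm) h
  have hs3 : (1:ℝ) ≤ (1 + Real.sqrt (B + 3)) ^ 2 := by
    have : (0:ℝ) ≤ Real.sqrt (B + 3) := Real.sqrt_nonneg _
    nlinarith
  rcases le_or_gt m 1 with hm1 | hm1
  · linarith
  · -- log m ≤ 2 * sqrt m
    set s := Real.sqrt m with hs
    have hs0 : 0 < s := Real.sqrt_pos.2 hm
    have hm2 : m = s ^ 2 := (Real.sq_sqrt hm.le).symm
    have hlog : Real.log m ≤ 2 * s := by
      have h1 : Real.log s ≤ s - 1 := Real.log_le_sub_one_of_pos hs0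
      have h2 : Real.log m = 2 * Real.log s := by
        rw [hm2, Real.log_pow]; push_cast; ring
      linarith
    have hlogm0 : 0 ≤ Real.log m := Real.log_nonneg hm1.le
    have hll : l - 1 ≤ l * Real.log l := mul_log_ge hl
    have hllm : l * Real.log m ≤ Real.log m := by
      nlinarith
    have hkey : m - 2 * s - 2 ≤ B := by
      have := h; rw [phiB] at this; nlinarith
    -- (s-1)^2 ≤ B+3, so s ≤ 1 + sqrt(B+3)
    have h5 : (s - 1) ^ 2 ≤ B + 3 := by nlinarith
    have h6 : s - 1 ≤ Real.sqrt (B + 3) := by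
      calc s - 1 ≤ |s - 1| := le_abs_self _
        _ = Real.sqrt ((s - 1) ^ 2) := (Real.sqrt_sq_eq_abs _).symm
        _ ≤ Real.sqrt (B + 3) := Real.sqrt_le_sqrt h5
    nlinarith [Real.sqrt_nonneg (B + 3)]

lemma phiB_segment_le {a p m t : ℝ} (ha : 0 ≤ a) (hp : 0 ≤ p) (ht0 : 0 ≤ t) (ht1 : t ≤ 1) :
    phiB ((1 - t) * a + t * p) m - phiB a m ≤ t * (phiB p m - phiB a m) := by
  have hcvx := Real.convexOn_mul_log.2 (Set.mem_Ici.2 ha) (Set.mem_Ici.2 hp)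
    (by linarith : (0:ℝ) ≤ 1 - t) ht0 (by ring)
  simp only [smul_eq_mul] at hcvx
  simp only [phiB]
  nlinarith [hcvx]

lemma phiB_zero_segment {p m t : ℝ} (hp : 0 ≤ p) (ht0 : 0 < t) :
    phiB (t * p) m - phiB 0 m = t * p * Real.log t + t * (phiB p m - phiB 0 m) := by
  rcases eq_or_lt_of_le hp with h | hp
  · simp [phiB, ← h]
  · simp only [phiB, Real.log_mul ht0.ne' hp.ne', Real.log_zero]
    ring

lemma bregmanD_eq_prod (n : ℕ) (L M : Fin n → Fin n → ℝ) :
    bregmanD n L M = ∑ p : Fin n × Fin n, phiB (L p.1 p.2) (M p.1 p.2) := by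
  simp [bregmanD, phiB, Fintype.sum_prod_type]

lemma minimizer_pos {n : ℕ} {S : Set (Fin n → Fin n → ℝ)} (hconv : Convex ℝ S)
    {P : Fin n → Fin n → ℝ} (hP : P ∈ S) (hPpos : ∀ i j, 0 < P i j)
    {m A : Fin n → Fin n → ℝ} (hm : ∀ i j, 0 < m i j) (hA : A ∈ S)
    (hAnn : ∀ i j, 0 ≤ A i j)
    (hmin : ∀ L ∈ S, bregmanD n A m ≤ bregmanD n L m) (a : Fin n) (b : Fin n) :
    0 < A a b := by
  by_contra hab
  have hab0 : A a b = 0 := le_antisymm (not_lt.mp hab) (hAnn a b)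
  set K : ℝ := ∑ p : Fin n × Fin n, (phiB (P p.1 p.2) (m p.1 p.2) - phiB (A p.1 p.2) (m p.1 p.2))
    with hK
  set t : ℝ := min (1/2) (Real.exp (-(K + 1) / P a b)) with htdef
  have ht0 : 0 < t := lt_min (by norm_num) (Real.exp_pos _)
  have ht1 : t ≤ 1 := by
    rw [htdef]; exact le_trans (min_le_left _ _) (by norm_num)
  have hlogt : Real.log t ≤ -(K + 1) / P a b := by
    calc Real.log t ≤ Real.log (Real.exp (-(K + 1) / P a b)) :=
          Real.log_le_log ht0 (min_le_right _ _)
      _ = -(K + 1) / P a b := Real.log_exp _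
  set L : Fin n → Fin n → ℝ := fun i j => (1 - t) * A i j + t * P i j with hLdef
  have hLS : L ∈ S := by
    have h := hconv hA hP (show (0:ℝ) ≤ 1 - t by linarith) ht0.le (by ring)
    have he : L = (1 - t) • A + t • P := by
      funext i j
      simp [hLdef, Pi.smul_apply, smul_eq_mul]
    rw [he]; exact h
  have hminL := hmin L hLS
  have hbound : ∀ p : Fin n × Fin n,
      phiB (L p.1 p.2) (m p.1 p.2) - phiB (A p.1 p.2) (m p.1 p.2) ≤
        t * (phiB (P p.1 p.2) (m p.1 p.2) - phiB (A p.1 p.2) (m p.1 p.2)) :=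
    fun p => phiB_segment_le (hAnn _ _) (hPpos _ _).le ht0.le ht1
  have hLab : L a b = t * P a b := by simp [hLdef, hab0]
  have hexact : phiB (L a b) (m a b) - phiB (A a b) (m a b) =
      t * P a b * Real.log t + t * (phiB (P a b) (m a b) - phiB (A a b) (m a b)) := by
    rw [hLab, hab0]
    exact phiB_zero_segment (hPpos a b).le ht0
  have hsplit1 : bregmanD n L m - bregmanD n A m =
      (phiB (L a b) (m a b) - phiB (A a b) (m a b)) +
        ∑ p ∈ Finset.univ.erase ((a, b) : Fin n × Fin n),
          (phiB (L p.1 p.2) (m p.1 p.2) - phiB (A p.1 p.2) (m p.1 p.2)) := by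
    rw [bregmanD_eq_prod, bregmanD_eq_prod, ← Finset.sum_sub_distrib,
      ← Finset.add_sum_erase _ _ (Finset.mem_univ ((a, b) : Fin n × Fin n))]
  have hsplit2 : K = (phiB (P a b) (m a b) - phiB (A a b) (m a b)) +
      ∑ p ∈ Finset.univ.erase ((a, b) : Fin n × Fin n),
        (phiB (P p.1 p.2) (m p.1 p.2) - phiB (A p.1 p.2) (m p.1 p.2)) := by
    rw [hK, ← Finset.add_sum_erase _ _ (Finset.mem_univ ((a, b) : Fin n × Fin n))]
  have h2 : ∑ p ∈ Finset.univ.erase ((a, b) : Fin n × Fin n),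
        (phiB (L p.1 p.2) (m p.1 p.2) - phiB (A p.1 p.2) (m p.1 p.2)) ≤
      ∑ p ∈ Finset.univ.erase ((a, b) : Fin n × Fin n),
        t * (phiB (P p.1 p.2) (m p.1 p.2) - phiB (A p.1 p.2) (m p.1 p.2)) :=
    Finset.sum_le_sum fun p _ => hbound p
  have hdiff : bregmanD n L m - bregmanD n A m ≤ t * P a b * Real.log t + t * K := by
    rw [hsplit1, hexact, hsplit2, mul_add, Finset.mul_sum]
    linarith [h2]
  have hneg : t * P a b * Real.log t + t * K ≤ -t := by
    have h1 : t * P a b * Real.log t ≤ t * P a b * (-(K + 1) / P a b) :=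
      mul_le_mul_of_nonneg_left hlogt (mul_nonneg ht0.le (hPpos a b).le)
    have hPab : P a b ≠ 0 := (hPpos a b).ne'
    have h3 : t * P a b * (-(K + 1) / P a b) = -(t * (K + 1)) := by
      field_simp
    nlinarith
  linarith

lemma bregman_pythagoras {n : ℕ} {S : Set (Fin n → Fin n → ℝ)}
    (hSaff : ∀ A L : Fin n → Fin n → ℝ, A ∈ S → L ∈ S → ∀ t : ℝ,
      (∀ i j, 0 ≤ A i j + t * (L i j - A i j)) →
      (fun i j => A i j + t * (L i j - A i j)) ∈ S)
    {m A : Fin n → Fin n → ℝ} (hm : ∀ i j, 0 < m i j) (hApos : ∀ i j, 0 < A i j)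
    (hA : A ∈ S) (hmin : ∀ L ∈ S, bregmanD n A m ≤ bregmanD n L m)
    (L : Fin n → Fin n → ℝ) (hL : L ∈ S) :
    bregmanD n L m = bregmanD n L A + bregmanD n A m := by
  set d : Fin n → Fin n → ℝ := fun i j => L i j - A i j with hd
  set g : ℝ → ℝ := fun t => ∑ p : Fin n × Fin n,
    phiB (A p.1 p.2 + t * d p.1 p.2) (m p.1 p.2) with hg
  set D0 : ℝ := ∑ p : Fin n × Fin n,
    d p.1 p.2 * (Real.log (A p.1 p.2) - Real.log (m p.1 p.2)) with hD0
  have hterm : ∀ p : Fin n × Fin n,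
      HasDerivAt (fun t => phiB (A p.1 p.2 + t * d p.1 p.2) (m p.1 p.2))
        (d p.1 p.2 * (Real.log (A p.1 p.2) - Real.log (m p.1 p.2))) 0 := by
    intro p
    have hu : HasDerivAt (fun t : ℝ => A p.1 p.2 + t * d p.1 p.2) (d p.1 p.2) 0 := by
      simpa using ((hasDerivAt_id (0:ℝ)).mul_const (d p.1 p.2)).const_add (A p.1 p.2)
    have h0 : A p.1 p.2 + 0 * d p.1 p.2 = A p.1 p.2 := by ring
    have hml : HasDerivAt (fun y : ℝ => y * Real.log y)
        (Real.log (A p.1 p.2) + 1) (A p.1 p.2) :=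
      Real.hasDerivAt_mul_log (hApos p.1 p.2).ne'
    rw [← h0] at hml
    have hcomp := hml.comp 0 hu
    have hfull := ((hcomp.sub (hu.mul_const (Real.log (m p.1 p.2)))).sub hu).add_const
      (m p.1 p.2)
    simp only [phiB]
    refine hfull.congr_deriv ?_
    rw [h0]; ring
  have hgderiv : HasDerivAt g D0 0 := by
    rw [hg, hD0]
    exact HasDerivAt.fun_sum fun p _ => hterm p
  have hev : ∀ᶠ t in nhds (0:ℝ), ∀ (i : Fin n) (j : Fin n), 0 < A i j + t * d i j := by
    refine Filter.eventually_all.2 fun i => Filter.eventually_all.2 fun j => ?_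
    have hc : Continuous fun t : ℝ => A i j + t * d i j := by continuity
    have ht : Tendsto (fun t : ℝ => A i j + t * d i j) (nhds 0) (nhds (A i j)) := by
      have := hc.tendsto 0
      simpa using this
    exact ht.eventually (eventually_gt_nhds (hApos i j))
  have hloc : IsLocalMin g 0 := by
    filter_upwards [hev] with t ht
    have hmem : (fun i j => A i j + t * d i j) ∈ S :=
      hSaff A L hA hL t fun i j => (ht i j).le
    have h1 : g t = bregmanD n (fun i j => A i j + t * d i j) m := by
      rw [hg, bregmanD_eq_prod]
    have h2 : g 0 = bregmanD n A m := by
      rw [bregmanD_eq_prod]; simp [hg]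
    rw [h1, h2]
    exact hmin _ hmem
  have hD0zero : D0 = 0 := hloc.hasDerivAt_eq_zero hgderiv
  have hpoint : ∀ p : Fin n × Fin n,
      phiB (L p.1 p.2) (m p.1 p.2) - phiB (L p.1 p.2) (A p.1 p.2) -
        phiB (A p.1 p.2) (m p.1 p.2) =
      d p.1 p.2 * (Real.log (A p.1 p.2) - Real.log (m p.1 p.2)) := by
    intro p
    simp only [phiB, hd]
    ring
  have hfin : bregmanD n L m - bregmanD n L A - bregmanD n A m = D0 := by
    rw [bregmanD_eq_prod, bregmanD_eq_prod, bregmanD_eq_prod, hD0,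
      ← Finset.sum_sub_distrib, ← Finset.sum_sub_distrib]
    exact Finset.sum_congr rfl fun p _ => hpoint p
  linarith [hfin, hD0zero]

lemma sinkCk_cases (n : ℕ) (x : Fin n → ℝ) (k : ℕ) :
    sinkCk n x k = sinkC1 n ∨ sinkCk n x k = sinkC2 n ∨ sinkCk n x k = sinkC3 n x := by
  unfold sinkCk
  have h : k % 3 = 0 ∨ k % 3 = 1 ∨ k % 3 = 2 := by omega
  rcases h with h | h | h <;> simp [h]

lemma sinkC1_nonneg {n} {L} (h : L ∈ sinkC1 n) : ∀ i j, 0 ≤ L i j := h.1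
lemma sinkC2_nonneg {n} {L} (h : L ∈ sinkC2 n) : ∀ i j, 0 ≤ L i j := h.1
lemma sinkC3_nonneg {n x} {L} (h : L ∈ sinkC3 n x) : ∀ i j, 0 ≤ L i j := h.1

lemma sinkCk_nonneg {n x k} {L} (h : L ∈ sinkCk n x k) : ∀ i j, 0 ≤ L i j := by
  rcases sinkCk_cases n x k with hh | hh | hh <;> rw [hh] at h <;> exact h.1

lemma sinkC1_convex (n : ℕ) : Convex ℝ (sinkC1 n) := by
  intro L hL M hM a b ha hb hab
  refine ⟨fun i j => ?_, fun i => ?_⟩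
  · have := hL.1 i j; have := hM.1 i j
    simp only [Pi.add_apply, Pi.smul_apply, smul_eq_mul]
    nlinarith
  · simp only [Pi.add_apply, Pi.smul_apply, smul_eq_mul]
    rw [Finset.sum_add_distrib, ← Finset.mul_sum, ← Finset.mul_sum, hL.2 i, hM.2 i]
    linarith

lemma sinkC2_convex (n : ℕ) : Convex ℝ (sinkC2 n) := by
  intro L hL M hM a b ha hb hab
  refine ⟨fun i j => ?_, fun j => ?_⟩
  · have := hL.1 i j; have := hM.1 i j
    simp only [Pi.add_apply, Pi.smul_apply, smul_eq_mul]
    nlinarith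
  · simp only [Pi.add_apply, Pi.smul_apply, smul_eq_mul]
    rw [Finset.sum_add_distrib, ← Finset.mul_sum, ← Finset.mul_sum, hL.2 j, hM.2 j]
    linarith

lemma sinkC3_convex (n : ℕ) (x : Fin n → ℝ) : Convex ℝ (sinkC3 n x) := by
  intro L hL M hM a b ha hb hab
  refine ⟨fun i j => ?_, fun i => ?_⟩
  · have := hL.1 i j; have := hM.1 i j
    simp only [Pi.add_apply, Pi.smul_apply, smul_eq_mul]
    nlinarith
  · simp only [Pi.add_apply, Pi.smul_apply, smul_eq_mul]
    have : ∀ j : Fin n, ((j:ℕ):ℝ) * (a * L i j + b * M i j)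
        = a * (((j:ℕ):ℝ) * L i j) + b * (((j:ℕ):ℝ) * M i j) := fun j => by ring
    rw [Finset.sum_congr rfl fun j _ => this j, Finset.sum_add_distrib,
      ← Finset.mul_sum, ← Finset.mul_sum, hL.2 i, hM.2 i]
    linear_combination x i * hab

lemma sinkCk_convex (n : ℕ) (x : Fin n → ℝ) (k : ℕ) : Convex ℝ (sinkCk n x k) := by
  rcases sinkCk_cases n x k with hh | hh | hh <;> rw [hh]
  exacts [sinkC1_convex n, sinkC2_convex n, sinkC3_convex n x]

lemma sinkCk_affine (n : ℕ) (x : Fin n → ℝ) (k : ℕ) :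
    ∀ A L : Fin n → Fin n → ℝ, A ∈ sinkCk n x k → L ∈ sinkCk n x k → ∀ t : ℝ,
      (∀ i j, 0 ≤ A i j + t * (L i j - A i j)) →
      (fun i j => A i j + t * (L i j - A i j)) ∈ sinkCk n x k := by
  intro A L hA hL t hnn
  rcases sinkCk_cases n x k with hh | hh | hh <;> rw [hh] at hA hL ⊢
  · refine ⟨hnn, fun i => ?_⟩
    have h1 : ∀ j, A i j + t * (L i j - A i j) = (1 - t) * A i j + t * L i j :=
      fun j => by ring
    rw [Finset.sum_congr rfl fun j _ => h1 j, Finset.sum_add_distrib,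
      ← Finset.mul_sum, ← Finset.mul_sum, hA.2 i, hL.2 i]
    ring
  · refine ⟨hnn, fun j => ?_⟩
    have h1 : ∀ i, A i j + t * (L i j - A i j) = (1 - t) * A i j + t * L i j :=
      fun i => by ring
    rw [Finset.sum_congr rfl fun i _ => h1 i, Finset.sum_add_distrib,
      ← Finset.mul_sum, ← Finset.mul_sum, hA.2 j, hL.2 j]
    ring
  · refine ⟨hnn, fun i => ?_⟩
    have h1 : ∀ j : Fin n, ((j:ℕ):ℝ) * (A i j + t * (L i j - A i j))
        = (1 - t) * (((j:ℕ):ℝ) * A i j) + t * (((j:ℕ):ℝ) * L i j) := fun j => by ring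
    rw [Finset.sum_congr rfl fun j _ => h1 j, Finset.sum_add_distrib,
      ← Finset.mul_sum, ← Finset.mul_sum, hA.2 i, hL.2 i]
    ring

lemma filter_cast_sum (n : ℕ) : ∀ m : ℕ, m ≤ n →
    ∑ i ∈ Finset.univ.filter (fun i : Fin n => (i : ℕ) < m), ((i : ℕ) : ℝ)
      = m * (m - 1) / 2 := by
  intro m
  induction m with
  | zero => intro _; simp
  | succ m ihm =>
    intro hm
    have hsplit : Finset.univ.filter (fun i : Fin n => (i : ℕ) < m + 1)
        = insert (⟨m, hm⟩ : Fin n) (Finset.univ.filter (fun i : Fin n => (i : ℕ) < m)) := by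
      ext i
      simp only [Finset.mem_insert, Finset.mem_filter, Finset.mem_univ, true_and]
      constructor
      · intro h
        rcases Nat.lt_succ_iff_lt_or_eq.1 h with h | h
        · exact Or.inr h
        · exact Or.inl (Fin.ext h)
      · rintro (rfl | h)
        · simp
        · omega
    have hnm : (⟨m, hm⟩ : Fin n) ∉ Finset.univ.filter (fun i : Fin n => (i : ℕ) < m) := by
      simp
    rw [hsplit, Finset.sum_insert hnm, ihm (by omega)]
    push_cast
    ring

lemma univ_filter_all (n : ℕ) (m : ℕ) (hm : n ≤ m) :
    Finset.univ.filter (fun i : Fin n => (i : ℕ) < m) = Finset.univ := by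
  apply Finset.filter_true_of_mem
  intro i _
  exact lt_of_lt_of_le i.isLt hm

/-- uniform matrix belongs to C1 and C2 and is positive -/
lemma uniform_mem (n : ℕ) (hn : 0 < n) :
    (fun _ _ => (n : ℝ)⁻¹) ∈ sinkC1 n ∧ (fun _ _ => (n : ℝ)⁻¹) ∈ sinkC2 n ∧
      ∀ i j : Fin n, (0:ℝ) < (n : ℝ)⁻¹ := by
  have hnR : (0:ℝ) < n := by exact_mod_cast hn
  have hrow : ∑ _j : Fin n, (n : ℝ)⁻¹ = 1 := by
    rw [Finset.sum_const, Finset.card_univ, Fintype.card_fin, nsmul_eq_mul]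
    field_simp
  exact ⟨⟨fun i j => by positivity, fun i => hrow⟩,
    ⟨fun i j => by positivity, fun j => hrow⟩, fun i j => by positivity⟩

/-- positive member of C3 -/
lemma sinkC3_posmem {n : ℕ} (x : Fin n → ℝ)
    (hxc : (2 ≤ n ∧ ∀ i, 0 < x i) ∨ (n = 1 ∧ ∀ i, x i = 0)) :
    ∃ P : Fin n → Fin n → ℝ, P ∈ sinkC3 n x ∧ ∀ i j, 0 < P i j := by
  rcases hxc with ⟨hn2, hxpos⟩ | ⟨hn1, hx0⟩
  · set j1 : Fin n := ⟨1, by omega⟩ with hj1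
    set T : ℝ := ∑ j ∈ Finset.univ.erase j1, ((j : ℕ) : ℝ) with hT
    have hT0 : 0 ≤ T := Finset.sum_nonneg fun j _ => by positivity
    refine ⟨fun i j => if j = j1 then x i - (x i / (2 * (T + 1))) * T
      else x i / (2 * (T + 1)), ⟨fun i j => ?_, fun i => ?_⟩, fun i j => ?_⟩
    · dsimp only
      have hxi := hxpos i
      have hε : 0 < x i / (2 * (T + 1)) := by positivity
      have hεT : (x i / (2 * (T + 1))) * T < x i := by
        have h1 : (x i / (2 * (T + 1))) * (T + 1) = x i / 2 := by field_simp
        nlinarith [hxpos i]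
      split_ifs <;> linarith
    · dsimp only
      rw [← Finset.add_sum_erase _ _ (Finset.mem_univ j1)]
      rw [if_pos rfl]
      have h2 : ∑ j ∈ Finset.univ.erase j1, ((j:ℕ):ℝ) *
          (if j = j1 then x i - (x i / (2 * (T + 1))) * T else x i / (2 * (T + 1)))
          = T * (x i / (2 * (T + 1))) := by
        rw [Finset.sum_congr rfl (fun j hj => by
          rw [if_neg (Finset.ne_of_mem_erase hj)]), ← Finset.sum_mul]
      rw [h2]
      have hj1v : ((j1 : ℕ) : ℝ) = 1 := by simp [hj1]
      rw [hj1v]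
      ring
    · dsimp only
      have hxi := hxpos i
      have hε : 0 < x i / (2 * (T + 1)) := by positivity
      have hεT : (x i / (2 * (T + 1))) * T < x i := by
        have h1 : (x i / (2 * (T + 1))) * (T + 1) = x i / 2 := by field_simp
        nlinarith [hxpos i]
      split_ifs <;> linarith
  · subst hn1
    refine ⟨fun _ _ => 1, ⟨fun i j => by norm_num, fun i => ?_⟩, fun i j => by norm_num⟩
    rw [hx0 i]
    simp

lemma tendsto_entry {n : ℕ} {u : ℕ → (Fin n → Fin n → ℝ)} {A : Fin n → Fin n → ℝ}
    (h : Tendsto u atTop (nhds A)) (i j : Fin n) :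
    Tendsto (fun k => u k i j) atTop (nhds (A i j)) := by
  have h1 := (tendsto_pi_nhds.1 h) i
  exact (tendsto_pi_nhds.1 h1) j

lemma mem_sinkC1_of_tendsto {n : ℕ} {u : ℕ → (Fin n → Fin n → ℝ)} {A : Fin n → Fin n → ℝ}
    (hu : ∀ k, u k ∈ sinkC1 n) (h : Tendsto u atTop (nhds A)) : A ∈ sinkC1 n := by
  refine ⟨fun i j => ge_of_tendsto' (tendsto_entry h i j) (fun k => (hu k).1 i j),
    fun i => ?_⟩
  have hs : Tendsto (fun k => ∑ j, u k i j) atTop (nhds (∑ j, A i j)) :=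
    tendsto_finset_sum _ (fun j _ => tendsto_entry h i j)
  have hconst : (fun k => ∑ j, u k i j) = fun _ => (1:ℝ) := funext fun k => (hu k).2 i
  rw [hconst] at hs
  exact tendsto_nhds_unique hs tendsto_const_nhds

lemma mem_sinkC2_of_tendsto {n : ℕ} {u : ℕ → (Fin n → Fin n → ℝ)} {A : Fin n → Fin n → ℝ}
    (hu : ∀ k, u k ∈ sinkC2 n) (h : Tendsto u atTop (nhds A)) : A ∈ sinkC2 n := by
  refine ⟨fun i j => ge_of_tendsto' (tendsto_entry h i j) (fun k => (hu k).1 i j),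
    fun j => ?_⟩
  have hs : Tendsto (fun k => ∑ i, u k i j) atTop (nhds (∑ i, A i j)) :=
    tendsto_finset_sum _ (fun i _ => tendsto_entry h i j)
  have hconst : (fun k => ∑ i, u k i j) = fun _ => (1:ℝ) := funext fun k => (hu k).2 j
  rw [hconst] at hs
  exact tendsto_nhds_unique hs tendsto_const_nhds

lemma mem_sinkC3_of_tendsto {n : ℕ} {x : Fin n → ℝ} {u : ℕ → (Fin n → Fin n → ℝ)}
    {A : Fin n → Fin n → ℝ}
    (hu : ∀ k, u k ∈ sinkC3 n x) (h : Tendsto u atTop (nhds A)) : A ∈ sinkC3 n x := by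
  refine ⟨fun i j => ge_of_tendsto' (tendsto_entry h i j) (fun k => (hu k).1 i j),
    fun i => ?_⟩
  have hs : Tendsto (fun k => ∑ j : Fin n, ((j:ℕ):ℝ) * u k i j) atTop
      (nhds (∑ j : Fin n, ((j:ℕ):ℝ) * A i j)) :=
    tendsto_finset_sum _ (fun j _ => (tendsto_entry h i j).const_mul _)
  have hconst : (fun k => ∑ j : Fin n, ((j:ℕ):ℝ) * u k i j) = fun _ => x i :=
    funext fun k => (hu k).2 i
  rw [hconst] at hs
  exact tendsto_nhds_unique hs tendsto_const_nhds

section HLP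
variable {n : ℕ}

-- sum of (y' - y) where y' bumps j₀ up by δ and k₀ down by δ
lemma bump_sum_diff (j₀ k₀ : Fin n) (hjk : j₀ ≠ k₀) (δ : ℝ) (y : Fin n → ℝ)
    (s : Finset (Fin n)) :
    ∑ i ∈ s, ((if i = j₀ then y j₀ + δ else if i = k₀ then y k₀ - δ else y i) - y i)
      = (if j₀ ∈ s then δ else 0) - (if k₀ ∈ s then δ else 0) := by
  have hpt : ∀ i : Fin n,
      ((if i = j₀ then y j₀ + δ else if i = k₀ then y k₀ - δ else y i) - y i)
        = (if i = j₀ then δ else 0) - (if i = k₀ then δ else 0) := by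
    intro i
    by_cases h1 : i = j₀
    · subst h1; simp [hjk]
    · by_cases h2 : i = k₀
      · subst h2; simp [h1]
      · simp [h1, h2]
  rw [Finset.sum_congr rfl fun i _ => hpt i, Finset.sum_sub_distrib,
    Finset.sum_ite_eq' s j₀ (fun _ => δ), Finset.sum_ite_eq' s k₀ (fun _ => δ)]

lemma hlp_aux (x : Fin n → ℝ) (hx : Monotone x) :
    ∀ N : ℕ, ∀ y : Fin n → ℝ,
    (Finset.univ.filter (fun i => x i ≠ y i)).card ≤ N →
    (∀ m : ℕ, m ≤ n → ∑ i ∈ Finset.univ.filter (fun i : Fin n => (i : ℕ) < m), y i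
      ≤ ∑ i ∈ Finset.univ.filter (fun i : Fin n => (i : ℕ) < m), x i) →
    (∑ i, x i = ∑ i, y i) →
    ∃ D : Fin n → Fin n → ℝ, (∀ i j, 0 ≤ D i j) ∧ (∀ i, ∑ j, D i j = 1) ∧
      (∀ j, ∑ i, D i j = 1) ∧ (∀ i, ∑ j, D i j * y j = x i) := by
  intro N
  induction N with
  | zero =>
    intro y hcard _ _
    have hxy : ∀ i, x i = y i := by
      intro i
      by_contra h
      have : i ∈ Finset.univ.filter (fun i => x i ≠ y i) := by
        simp [h]
      have := Finset.card_pos.2 ⟨i, this⟩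
      omega
    refine ⟨fun i j => if i = j then 1 else 0, fun i j => by positivity, fun i => by simp,
      fun j => by simp [eq_comm], fun i => ?_⟩
    simp [hxy i]
  | succ N ih =>
    intro y hcard hpre htot
    by_cases hU : (Finset.univ.filter (fun i => x i ≠ y i)) = ∅
    · exact ih y (by rw [hU]; simp) hpre htot
    have hUne : (Finset.univ.filter (fun i => x i ≠ y i)).Nonempty :=
      Finset.nonempty_of_ne_empty hU
    set U := Finset.univ.filter (fun i => x i ≠ y i) with hUdef
    set j₀ := U.min' hUne with hj₀
    have hj₀U : j₀ ∈ U := Finset.min'_mem _ _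
    have hj₀ne : x j₀ ≠ y j₀ := by
      have := hj₀U; rw [hUdef, Finset.mem_filter] at this; exact this.2
    have hbelow : ∀ i : Fin n, i < j₀ → x i = y i := by
      intro i hi
      by_contra h
      have hiU : i ∈ U := by rw [hUdef]; simp [h]
      exact absurd (Finset.min'_le _ _ hiU) (not_le.2 hi)
    -- x j₀ > y j₀
    have hxj₀ : y j₀ < x j₀ := by
      have hm : (j₀ : ℕ) + 1 ≤ n := j₀.isLt
      have hp := hpre ((j₀ : ℕ) + 1) hm
      have hsplit : Finset.univ.filter (fun i : Fin n => (i : ℕ) < (j₀ : ℕ) + 1)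
          = insert j₀ (Finset.univ.filter (fun i : Fin n => (i : ℕ) < (j₀ : ℕ))) := by
        ext i
        simp only [Finset.mem_insert, Finset.mem_filter, Finset.mem_univ, true_and]
        constructor
        · intro h
          rcases Nat.lt_succ_iff_lt_or_eq.1 h with h | h
          · exact Or.inr h
          · exact Or.inl (Fin.ext h)
        · rintro (rfl | h)
          · omega
          · omega
      have hnm : j₀ ∉ Finset.univ.filter (fun i : Fin n => (i : ℕ) < (j₀ : ℕ)) := by
        simp
      rw [hsplit, Finset.sum_insert hnm, Finset.sum_insert hnm] at hp
      have heq : ∑ i ∈ Finset.univ.filter (fun i : Fin n => (i : ℕ) < (j₀ : ℕ)), x i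
          = ∑ i ∈ Finset.univ.filter (fun i : Fin n => (i : ℕ) < (j₀ : ℕ)), y i := by
        refine Finset.sum_congr rfl fun i hi => ?_
        rw [Finset.mem_filter] at hi
        exact hbelow i (by rw [Fin.lt_def]; exact hi.2)
      have : y j₀ ≤ x j₀ := by linarith
      exact lt_of_le_of_ne this (Ne.symm hj₀ne)
    -- find k₀ above j₀ with x k₀ < y k₀
    have hVne : (Finset.univ.filter (fun i => j₀ < i ∧ x i < y i)).Nonempty := by
      by_contra hV
      rw [Finset.not_nonempty_iff_eq_empty, Finset.filter_eq_empty_iff] at hV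
      have h0 : ∑ i, (x i - y i) = 0 := by
        rw [Finset.sum_sub_distrib, htot]; ring
      have h1 : ∑ i ∈ Finset.univ.filter (fun i => j₀ ≤ i), (x i - y i)
          = ∑ i, (x i - y i) := by
        apply Finset.sum_filter_of_ne
        intro i _ hne
        by_contra hle
        exact hne (by rw [hbelow i (lt_of_not_ge hle)]; ring)
      have hsplit2 : Finset.univ.filter (fun i => j₀ ≤ i)
          = insert j₀ (Finset.univ.filter (fun i => j₀ < i)) := by
        ext i
        simp only [Finset.mem_insert, Finset.mem_filter, Finset.mem_univ, true_and]
        constructor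
        · intro h
          rcases eq_or_lt_of_le h with h | h
          · exact Or.inl h.symm
          · exact Or.inr h
        · rintro (rfl | h)
          · exact le_refl _
          · exact h.le
      have hnm2 : j₀ ∉ Finset.univ.filter (fun i => j₀ < i) := by simp
      rw [hsplit2, Finset.sum_insert hnm2] at h1
      have hnn : 0 ≤ ∑ i ∈ Finset.univ.filter (fun i => j₀ < i), (x i - y i) := by
        apply Finset.sum_nonneg
        intro i hi
        rw [Finset.mem_filter] at hi
        have h5 := hV (Finset.mem_univ i)
        push_neg at h5
        have := h5 hi.2
        linarith
      rw [h0] at h1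
      linarith
    set V := Finset.univ.filter (fun i => j₀ < i ∧ x i < y i) with hVdef
    set k₀ := V.min' hVne with hk₀def
    have hk₀V : k₀ ∈ V := Finset.min'_mem _ _
    have hk₀ : j₀ < k₀ ∧ x k₀ < y k₀ := by
      have := hk₀V; rw [hVdef, Finset.mem_filter] at this; exact this.2
    have hmid : ∀ i : Fin n, j₀ < i → i < k₀ → y i ≤ x i := by
      intro i h1 h2
      by_contra h
      push_neg at h
      have hiV : i ∈ V := by rw [hVdef]; simp [h1, h]
      exact absurd (Finset.min'_le _ _ hiV) (not_le.2 h2)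
    set δ := min (x j₀ - y j₀) (y k₀ - x k₀) with hδdef
    have hδpos : 0 < δ := lt_min (by linarith [hxj₀]) (by linarith [hk₀.2])
    have hjk : j₀ ≠ k₀ := ne_of_lt hk₀.1
    have hyy : y j₀ < y k₀ := by
      have := hx hk₀.1.le
      linarith [hxj₀, hk₀.2]
    set lam := δ / (y k₀ - y j₀) with hlamdef
    have hlam0 : 0 < lam := div_pos hδpos (by linarith)
    have hlam1 : lam ≤ 1 := by
      rw [hlamdef, div_le_one (by linarith)]
      have h1 : δ ≤ x j₀ - y j₀ := min_le_left _ _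
      have := hx hk₀.1.le
      linarith [hk₀.2]
    set y' : Fin n → ℝ := fun i => if i = j₀ then y j₀ + δ else if i = k₀ then y k₀ - δ
      else y i with hy'def
    have hlamδ : lam * (y k₀ - y j₀) = δ := by
      rw [hlamdef]
      exact div_mul_cancel₀ δ (ne_of_gt (by linarith : (0:ℝ) < y k₀ - y j₀))
    set σ : Equiv.Perm (Fin n) := Equiv.swap j₀ k₀ with hσdef
    set T : Fin n → Fin n → ℝ := fun i j =>
      (1 - lam) * (if i = j then 1 else 0) + lam * (if σ i = j then 1 else 0) with hTdef
    have hTnn : ∀ i j, 0 ≤ T i j := by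
      intro i j
      rw [hTdef]
      dsimp only
      split_ifs <;> nlinarith
    have hTrow : ∀ i, ∑ j, T i j = 1 := by
      intro i
      rw [hTdef]
      dsimp only
      rw [Finset.sum_add_distrib, ← Finset.mul_sum, ← Finset.mul_sum]
      simp [Finset.sum_ite_eq]
    have hTcol : ∀ j, ∑ i, T i j = 1 := by
      intro j
      rw [hTdef]
      dsimp only
      rw [Finset.sum_add_distrib, ← Finset.mul_sum, ← Finset.mul_sum]
      have h1 : ∑ i : Fin n, (if i = j then (1:ℝ) else 0) = 1 := by
        simp [Finset.sum_ite_eq']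
      have h2 : ∑ i : Fin n, (if σ i = j then (1:ℝ) else 0) = 1 := by
        have : ∀ i : Fin n, (σ i = j) = (i = σ.symm j) := by
          intro i
          simp [Equiv.apply_eq_iff_eq_symm_apply]
        simp only [this]
        simp [Finset.sum_ite_eq']
      rw [h1, h2]; ring
    have hTy : ∀ i, ∑ j, T i j * y j = y' i := by
      intro i
      rw [hTdef]
      dsimp only
      have hexp : ∀ j, ((1 - lam) * (if i = j then (1:ℝ) else 0)
          + lam * (if σ i = j then 1 else 0)) * y j
          = (1 - lam) * ((if i = j then (1:ℝ) else 0) * y j)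
            + lam * ((if σ i = j then (1:ℝ) else 0) * y j) := fun j => by ring
      rw [Finset.sum_congr rfl fun j _ => hexp j, Finset.sum_add_distrib,
        ← Finset.mul_sum, ← Finset.mul_sum]
      have h1 : ∑ j : Fin n, (if i = j then (1:ℝ) else 0) * y j = y i := by
        simp [ite_mul, Finset.sum_ite_eq]
      have h2 : ∑ j : Fin n, (if σ i = j then (1:ℝ) else 0) * y j = y (σ i) := by
        simp [ite_mul, Finset.sum_ite_eq]
      rw [h1, h2, hy'def]
      dsimp only
      by_cases hi1 : i = j₀
      · subst hi1
        rw [if_pos rfl, hσdef]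
        rw [Equiv.swap_apply_left]
        linarith [hlamδ]
      · by_cases hi2 : i = k₀
        · subst hi2
          rw [if_neg hi1, if_pos rfl, hσdef, Equiv.swap_apply_right]
          linarith [hlamδ]
        · rw [if_neg hi1, if_neg hi2, hσdef, Equiv.swap_apply_of_ne_of_ne hi1 hi2]
          ring
    have hbump : ∀ s : Finset (Fin n), ∑ i ∈ s, y' i
        = ∑ i ∈ s, y i + ((if j₀ ∈ s then δ else 0) - (if k₀ ∈ s then δ else 0)) := by
      intro s
      have h3 : ∑ i ∈ s, y' i - ∑ i ∈ s, y i
          = (if j₀ ∈ s then δ else 0) - (if k₀ ∈ s then δ else 0) := by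
        rw [← Finset.sum_sub_distrib]
        simp only [hy'def]
        exact bump_sum_diff j₀ k₀ hjk δ y s
      linarith
    have htot' : ∑ i, x i = ∑ i, y' i := by
      rw [htot, hbump Finset.univ]
      simp
    have hpre' : ∀ m : ℕ, m ≤ n →
        ∑ i ∈ Finset.univ.filter (fun i : Fin n => (i : ℕ) < m), y' i
          ≤ ∑ i ∈ Finset.univ.filter (fun i : Fin n => (i : ℕ) < m), x i := by
      intro m hm
      set s := Finset.univ.filter (fun i : Fin n => (i : ℕ) < m) with hsdef
      have hb := hbump s
      by_cases hk0m : (k₀ : ℕ) < m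
      · have hj0m : (j₀ : ℕ) < m := lt_trans hk₀.1 hk0m
        have hjmem : j₀ ∈ s := by rw [hsdef]; simp [hj0m]
        have hkmem : k₀ ∈ s := by rw [hsdef]; simp [hk0m]
        rw [if_pos hjmem, if_pos hkmem] at hb
        have := hpre m hm
        rw [← hsdef] at this
        linarith
      · by_cases hj0m : (j₀ : ℕ) < m
        · have hjmem : j₀ ∈ s := by rw [hsdef]; simp [hj0m]
          have hkmem : k₀ ∉ s := by rw [hsdef]; simp [hk0m]
          rw [if_pos hjmem, if_neg hkmem] at hb
          have hred : ∑ i ∈ s.filter (fun i => j₀ ≤ i), (x i - y i)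
              = ∑ i ∈ s, (x i - y i) := by
            apply Finset.sum_filter_of_ne
            intro i _ hne
            by_contra hle
            exact hne (by rw [hbelow i (lt_of_not_ge hle)]; ring)
          have hins : s.filter (fun i => j₀ ≤ i)
              = insert j₀ (s.filter (fun i => j₀ < i)) := by
            ext i
            simp only [Finset.mem_insert, Finset.mem_filter]
            constructor
            · rintro ⟨h1, h2⟩
              rcases eq_or_lt_of_le h2 with h | h
              · exact Or.inl h.symm
              · exact Or.inr ⟨h1, h⟩
            · rintro (rfl | ⟨h1, h2⟩)
              · exact ⟨hjmem, le_refl _⟩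
              · exact ⟨h1, h2.le⟩
          have hnotmem : j₀ ∉ s.filter (fun i => j₀ < i) := by simp
          have hmidnn : 0 ≤ ∑ i ∈ s.filter (fun i => j₀ < i), (x i - y i) := by
            apply Finset.sum_nonneg
            intro i hi
            rw [Finset.mem_filter, hsdef, Finset.mem_filter] at hi
            have hik : i < k₀ := by
              rw [Fin.lt_def]
              have := hi.1.2
              omega
            have := hmid i hi.2 hik
            linarith
          have hdelta : δ ≤ ∑ i ∈ s, (x i - y i) := by
            rw [← hred, hins, Finset.sum_insert hnotmem]
            have := min_le_left (x j₀ - y j₀) (y k₀ - x k₀)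
            rw [← hδdef] at this
            linarith
          rw [Finset.sum_sub_distrib] at hdelta
          linarith
        · have hjmem : j₀ ∉ s := by rw [hsdef]; simp [hj0m]
          have hkmem : k₀ ∉ s := by
            rw [hsdef]
            simp only [Finset.mem_filter, Finset.mem_univ, true_and, not_lt]
            have : (j₀ : ℕ) < (k₀ : ℕ) := hk₀.1
            omega
          rw [if_neg hjmem, if_neg hkmem] at hb
          have := hpre m hm
          rw [← hsdef] at this
          linarith
    have hk₀U : k₀ ∈ U := by
      rw [hUdef]
      simp only [Finset.mem_filter, Finset.mem_univ, true_and]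
      exact ne_of_lt hk₀.2
    obtain ⟨e, heU, hey⟩ : ∃ e, e ∈ U ∧ x e = y' e := by
      rcases min_cases (x j₀ - y j₀) (y k₀ - x k₀) with ⟨h1, _⟩ | ⟨h1, _⟩
      · refine ⟨j₀, hj₀U, ?_⟩
        have hδval : δ = x j₀ - y j₀ := by rw [hδdef, h1]
        simp only [hy'def]
        rw [if_pos trivial]
        linarith
      · refine ⟨k₀, hk₀U, ?_⟩
        have hδval : δ = y k₀ - x k₀ := by rw [hδdef, h1]
        simp only [hy'def]
        rw [if_pos trivial, if_neg (Ne.symm hjk)]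
        linarith
    have hsub : Finset.univ.filter (fun i => x i ≠ y' i) ⊆ U.erase e := by
      intro i hi
      rw [Finset.mem_filter] at hi
      rw [Finset.mem_erase]
      refine ⟨?_, ?_⟩
      · rintro rfl
        exact hi.2 hey
      · by_cases h1 : i = j₀
        · subst h1; exact hj₀U
        · by_cases h2 : i = k₀
          · subst h2; exact hk₀U
          · have hyi : y' i = y i := by
              simp only [hy'def]
              rw [if_neg h1, if_neg h2]
            rw [hUdef]
            simp only [Finset.mem_filter, Finset.mem_univ, true_and]
            rw [← hyi]
            exact hi.2
    have hcard' : (Finset.univ.filter (fun i => x i ≠ y' i)).card ≤ N := by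
      have h1 := Finset.card_le_card hsub
      rw [Finset.card_erase_of_mem heU] at h1
      omega
    obtain ⟨D', hD'nn, hD'row, hD'col, hD'y⟩ := ih y' hcard' hpre' htot'
    refine ⟨fun i j => ∑ p, D' i p * T p j, ?_, ?_, ?_, ?_⟩
    · intro i j
      exact Finset.sum_nonneg fun p _ => mul_nonneg (hD'nn i p) (hTnn p j)
    · intro i
      rw [Finset.sum_comm]
      calc ∑ p, ∑ j, D' i p * T p j = ∑ p, D' i p * ∑ j, T p j :=
            Finset.sum_congr rfl fun p _ => (Finset.mul_sum _ _ _).symm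
        _ = ∑ p, D' i p := Finset.sum_congr rfl fun p _ => by rw [hTrow p, mul_one]
        _ = 1 := hD'row i
    · intro j
      rw [Finset.sum_comm]
      calc ∑ p, ∑ i, D' i p * T p j = ∑ p, (∑ i, D' i p) * T p j :=
            Finset.sum_congr rfl fun p _ => (Finset.sum_mul _ _ _).symm
        _ = ∑ p, T p j := Finset.sum_congr rfl fun p _ => by rw [hD'col p, one_mul]
        _ = 1 := hTcol j
    · intro i
      have h1 : ∀ j, (∑ p, D' i p * T p j) * y j = ∑ p, D' i p * (T p j * y j) := by
        intro j
        rw [Finset.sum_mul]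
        exact Finset.sum_congr rfl fun p _ => by ring
      rw [Finset.sum_congr rfl fun j _ => h1 j, Finset.sum_comm]
      calc ∑ p, ∑ j, D' i p * (T p j * y j) = ∑ p, D' i p * ∑ j, T p j * y j :=
            Finset.sum_congr rfl fun p _ => (Finset.mul_sum _ _ _).symm
        _ = ∑ p, D' i p * y' p := Finset.sum_congr rfl fun p _ => by rw [hTy p]
        _ = x i := hD'y i
end HLP


lemma bregmanD_nonneg {n : ℕ} {L m : Fin n → Fin n → ℝ} (hL : ∀ i j, 0 ≤ L i j)
    (hm : ∀ i j, 0 < m i j) : 0 ≤ bregmanD n L m := by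
  rw [bregmanD_eq_prod]
  exact Finset.sum_nonneg fun p _ => phiB_nonneg (hL _ _) (hm _ _)

lemma phiB_le_bregmanD (n : ℕ) (L m : Fin n → Fin n → ℝ) (hL : ∀ i j, 0 ≤ L i j)
    (hm : ∀ i j, 0 < m i j) (a b : Fin n) : phiB (L a b) (m a b) ≤ bregmanD n L m := by
  rw [bregmanD_eq_prod]
  exact Finset.single_le_sum (f := fun p : Fin n × Fin n => phiB (L p.1 p.2) (m p.1 p.2))
    (fun p _ => phiB_nonneg (hL _ _) (hm _ _)) (Finset.mem_univ ((a, b) : Fin n × Fin n))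

lemma sq_tendsto_zero {t : ℕ → ℝ} (h : Tendsto (fun k => (t k) ^ 2) atTop (nhds 0)) :
    Tendsto t atTop (nhds 0) := by
  have habs : Tendsto (fun k => |t k|) atTop (nhds 0) := by
    have h1 : Tendsto (fun k => Real.sqrt ((t k) ^ 2)) atTop (nhds (Real.sqrt 0)) :=
      (Real.continuous_sqrt.tendsto 0).comp h
    rw [Real.sqrt_zero] at h1
    have h2 : (fun k => Real.sqrt ((t k) ^ 2)) = fun k => |t k| :=
      funext fun k => Real.sqrt_sq_eq_abs _
    rwa [h2] at h1
  have hneg : Tendsto (fun k => -|t k|) atTop (nhds 0) := by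
    simpa using habs.neg
  exact tendsto_of_tendsto_of_tendsto_of_le_of_le hneg habs
    (fun k => neg_abs_le _) (fun k => le_abs_self _)

lemma sqrt_recover {v : ℕ → ℝ} {c : ℝ} (hc : 0 ≤ c) (hv : ∀ k, 0 ≤ v k)
    (h : Tendsto (fun k => Real.sqrt (v k)) atTop (nhds (Real.sqrt c))) :
    Tendsto v atTop (nhds c) := by
  have h2 := h.mul h
  rw [Real.mul_self_sqrt hc] at h2
  have h3 : (fun k => Real.sqrt (v k) * Real.sqrt (v k)) = v :=
    funext fun k => Real.mul_self_sqrt (hv k)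
  rwa [h3] at h2

lemma tendsto_of_bregman_to_zero {n : ℕ} {Mseq : ℕ → (Fin n → Fin n → ℝ)}
    {L : Fin n → Fin n → ℝ} (hL : ∀ i j, 0 ≤ L i j) (hM : ∀ k i j, 0 < Mseq k i j)
    (h : Tendsto (fun K => bregmanD n L (Mseq K)) atTop (nhds 0)) :
    Tendsto Mseq atTop (nhds L) := by
  rw [tendsto_pi_nhds]
  intro i
  rw [tendsto_pi_nhds]
  intro j
  have hsq : Tendsto (fun K => (Real.sqrt (L i j) - Real.sqrt (Mseq K i j)) ^ 2)
      atTop (nhds 0) := by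
    refine squeeze_zero (fun K => sq_nonneg _) (fun K => ?_) h
    exact le_trans (sq_sqrt_sub_le_phiB (hL i j) (hM K i j))
      (phiB_le_bregmanD n L (Mseq K) hL (hM K) i j)
  have hdiff := sq_tendsto_zero hsq
  have hsqrtM : Tendsto (fun K => Real.sqrt (Mseq K i j)) atTop
      (nhds (Real.sqrt (L i j))) := by
    have h2 := (tendsto_const_nhds (x := Real.sqrt (L i j))).sub hdiff
    rw [sub_zero] at h2
    have h3 : (fun K => Real.sqrt (L i j)
        - (Real.sqrt (L i j) - Real.sqrt (Mseq K i j)))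
        = fun K => Real.sqrt (Mseq K i j) := funext fun K => by ring
    rwa [h3] at h2
  exact sqrt_recover (hL i j) (fun K => (hM K i j).le) hsqrtM

lemma sinkCk_eq_C1 {n : ℕ} {x : Fin n → ℝ} {k : ℕ} (h : k % 3 = 1) :
    sinkCk n x k = sinkC1 n := by unfold sinkCk; rw [h]; norm_num
lemma sinkCk_eq_C2 {n : ℕ} {x : Fin n → ℝ} {k : ℕ} (h : k % 3 = 2) :
    sinkCk n x k = sinkC2 n := by unfold sinkCk; rw [h]; norm_num
lemma sinkCk_eq_C3 {n : ℕ} {x : Fin n → ℝ} {k : ℕ} (h : k % 3 = 0) :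
    sinkCk n x k = sinkC3 n x := by unfold sinkCk; rw [h]; norm_num

/-- **Convergence of Sinkhorn's algorithm.** Starting from the all-ones matrix
and iterating Bregman projections on `C_1, C_2, C_3` cyclically, the sequence
converges to the unique minimizer of the entropy on `C = C_1 ∩ C_2 ∩ C_3`. -/
theorem sinkhorn_converges_to_entropy_minimizer (n : ℕ) (x : Fin n → ℝ)
    (hx : Monotone x)
    (hsum : ∑ i, x i = (n * (n - 1) / 2 : ℝ))
    (hirr : ∀ k : ℕ, 1 ≤ k → k < n →
      (k * (k - 1) / 2 : ℝ) <
        ∑ i ∈ Finset.univ.filter (fun i : Fin n => (i : ℕ) < k), x i)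
    (M : ℕ → (Fin n → Fin n → ℝ))
    (hM0 : M 0 = fun _ _ => 1)
    (hstep : ∀ k : ℕ, M (k + 1) ∈ sinkCk n x (k + 1) ∧
      ∀ L ∈ sinkCk n x (k + 1), bregmanD n (M (k + 1)) (M k) ≤ bregmanD n L (M k)) :
    ∃ Mstar : Fin n → Fin n → ℝ,
      Mstar ∈ sinkC1 n ∩ sinkC2 n ∩ sinkC3 n x ∧
      (∀ L ∈ sinkC1 n ∩ sinkC2 n ∩ sinkC3 n x, entropyH n Mstar ≤ entropyH n L) ∧
      (∀ L ∈ sinkC1 n ∩ sinkC2 n ∩ sinkC3 n x,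
        (∀ L' ∈ sinkC1 n ∩ sinkC2 n ∩ sinkC3 n x, entropyH n L ≤ entropyH n L') →
        L = Mstar) ∧
      Tendsto M atTop (nhds Mstar) := by
  rcases Nat.eq_zero_or_pos n with hn0 | hn
  · -- degenerate case n = 0
    subst hn0
    have heq : ∀ L M' : Fin 0 → Fin 0 → ℝ, L = M' := fun L M' =>
      funext fun i => i.elim0
    refine ⟨M 0, ⟨⟨⟨fun i => i.elim0, fun i => i.elim0⟩, fun i => i.elim0, fun j => j.elim0⟩,
      fun i => i.elim0, fun i => i.elim0⟩, ?_, ?_, ?_⟩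
    · intro L _
      simp [entropyH]
    · intro L _ _
      exact heq L (M 0)
    · have : M = fun _ => M 0 := funext fun k => heq _ _
      rw [this]
      exact tendsto_const_nhds
  -- main case
  set C : Set (Fin n → Fin n → ℝ) := sinkC1 n ∩ sinkC2 n ∩ sinkC3 n x with hCdef
  have hCsub : ∀ r, C ⊆ sinkCk n x r := by
    intro r L hL
    rcases sinkCk_cases n x r with h | h | h <;> rw [h]
    exacts [hL.1.1, hL.1.2, hL.2]
  -- x facts
  have hxfacts : (2 ≤ n ∧ ∀ i, 0 < x i) ∨ (n = 1 ∧ ∀ i, x i = 0) := by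
    rcases Nat.lt_or_ge n 2 with h2 | h2
    · right
      have hn1 : n = 1 := by omega
      subst hn1
      refine ⟨rfl, fun i => ?_⟩
      have h0 : i = 0 := Subsingleton.elim _ _
      have hs := hsum
      rw [Fin.sum_univ_one] at hs
      rw [h0, hs]
      norm_num
    · left
      refine ⟨h2, fun i => ?_⟩
      have h1 := hirr 1 le_rfl (by omega)
      have hfe : Finset.univ.filter (fun i : Fin n => (i : ℕ) < 1)
          = {(⟨0, by omega⟩ : Fin n)} := by
        ext p
        simp only [Finset.mem_filter, Finset.mem_univ, true_and, Finset.mem_singleton,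
          Fin.ext_iff]
        omega
      rw [hfe, Finset.sum_singleton] at h1
      norm_num at h1
      have hle : x ⟨0, by omega⟩ ≤ x i := hx (by simp [Fin.le_def])
      linarith
  -- positivity of the whole sequence
  have hposCk : ∀ r : ℕ, ∃ P, P ∈ sinkCk n x r ∧ ∀ i j, 0 < P i j := by
    intro r
    rcases sinkCk_cases n x r with h | h | h <;> rw [h]
    · exact ⟨_, (uniform_mem n hn).1, (uniform_mem n hn).2.2⟩
    · exact ⟨_, (uniform_mem n hn).2.1, (uniform_mem n hn).2.2⟩
    · obtain ⟨P, hP1, hP2⟩ := sinkC3_posmem x hxfacts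
      exact ⟨P, hP1, hP2⟩
  have hMpos : ∀ k, ∀ i j : Fin n, 0 < M k i j := by
    intro k
    induction k with
    | zero => intro i j; simp [hM0]
    | succ k ihk =>
      obtain ⟨P, hPmem, hPpos⟩ := hposCk (k + 1)
      exact minimizer_pos (sinkCk_convex n x (k + 1)) hPmem hPpos ihk (hstep k).1
        (sinkCk_nonneg (hstep k).1) (fun L hL => (hstep k).2 L hL)
  -- the reference point L₀ = D in C, via HLP
  have hgauss : ∑ i ∈ Finset.univ.filter (fun i : Fin n => (i : ℕ) < n), ((i : ℕ) : ℝ)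
      = (n : ℝ) * ((n : ℝ) - 1) / 2 := filter_cast_sum n n le_rfl
  have huniv : Finset.univ.filter (fun i : Fin n => (i : ℕ) < n) = Finset.univ :=
    univ_filter_all n n le_rfl
  have hpreD : ∀ m : ℕ, m ≤ n →
      ∑ i ∈ Finset.univ.filter (fun i : Fin n => (i : ℕ) < m), ((i : ℕ) : ℝ)
        ≤ ∑ i ∈ Finset.univ.filter (fun i : Fin n => (i : ℕ) < m), x i := by
    intro m hm
    rw [filter_cast_sum n m hm]
    rcases Nat.eq_zero_or_pos m with hm0 | hm1
    · subst hm0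
      simp
    · rcases eq_or_lt_of_le hm with hmn | hmn
      · subst hmn
        rw [huniv, hsum]
      · exact (hirr m hm1 hmn).le
  have htotD : ∑ i, x i = ∑ i : Fin n, ((i : ℕ) : ℝ) := by
    rw [hsum]
    rw [huniv] at hgauss
    exact hgauss.symm
  obtain ⟨D, hDnn, hDrow, hDcol, hDy⟩ :=
    hlp_aux x hx ((Finset.univ.filter (fun i => x i ≠ ((i : ℕ) : ℝ))).card)
      (fun j : Fin n => ((j : ℕ) : ℝ)) le_rfl hpreD htotD
  have hDC : D ∈ C := by
    refine ⟨⟨⟨hDnn, hDrow⟩, hDnn, hDcol⟩, hDnn, fun i => ?_⟩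
    rw [← hDy i]
    exact Finset.sum_congr rfl fun j _ => mul_comm _ _
  -- Pythagoras
  have hpyth : ∀ k : ℕ, ∀ L ∈ sinkCk n x (k + 1), bregmanD n L (M k)
      = bregmanD n L (M (k + 1)) + bregmanD n (M (k + 1)) (M k) := fun k L hL =>
    bregman_pythagoras (sinkCk_affine n x (k + 1)) (hMpos k) (hMpos (k + 1)) (hstep k).1
      (fun L' hL' => (hstep k).2 L' hL') L hL
  set SK : ℕ → ℝ := fun K => ∑ k ∈ Finset.range K, bregmanD n (M (k + 1)) (M k) with hSKdef
  have hincnn : ∀ k, 0 ≤ bregmanD n (M (k + 1)) (M k) := fun k =>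
    bregmanD_nonneg (sinkCk_nonneg (hstep k).1) (hMpos k)
  have hSKnn : ∀ K, 0 ≤ SK K := fun K => Finset.sum_nonneg fun k _ => hincnn k
  have hSKsucc : ∀ K, SK (K + 1) = SK K + bregmanD n (M (K + 1)) (M K) := fun K => by
    rw [hSKdef]
    exact Finset.sum_range_succ _ _
  have htel : ∀ L ∈ C, ∀ K : ℕ, bregmanD n L (M 0) = bregmanD n L (M K) + SK K := by
    intro L hL K
    induction K with
    | zero => simp [hSKdef]
    | succ K ihK =>
      have hp := hpyth K L (hCsub (K + 1) hL)
      rw [hSKsucc K]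
      linarith
  set B : ℝ := bregmanD n D (M 0) with hBdef
  have hSKle : ∀ K, SK K ≤ B := by
    intro K
    have h1 := htel D hDC K
    have h2 := bregmanD_nonneg hDnn (hMpos K)
    linarith
  have hSKmono : Monotone SK := monotone_nat_of_le_succ fun K => by
    rw [hSKsucc K]
    linarith [hincnn K]
  set S : ℝ := ⨆ K, SK K with hSdef
  have hSKtend : Tendsto SK atTop (nhds S) :=
    tendsto_atTop_ciSup hSKmono ⟨B, by rintro z ⟨K, rfl⟩; exact hSKle K⟩
  have hinc0 : Tendsto (fun k => bregmanD n (M (k + 1)) (M k)) atTop (nhds 0) := by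
    have h1 : Tendsto (fun k => SK (k + 1)) atTop (nhds S) :=
      hSKtend.comp (tendsto_add_atTop_nat 1)
    have h2 := h1.sub hSKtend
    rw [sub_self] at h2
    have h3 : (fun k => SK (k + 1) - SK k) = fun k => bregmanD n (M (k + 1)) (M k) :=
      funext fun k => by rw [hSKsucc k]; ring
    rwa [h3] at h2
  have hsq0 : ∀ i j : Fin n, Tendsto
      (fun k => Real.sqrt (M (k + 1) i j) - Real.sqrt (M k i j)) atTop (nhds 0) := by
    intro i j
    apply sq_tendsto_zero
    refine squeeze_zero (fun k => sq_nonneg _) (fun k => ?_) hinc0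
    exact le_trans (sq_sqrt_sub_le_phiB (hMpos (k + 1) i j).le (hMpos k i j))
      (phiB_le_bregmanD n (M (k + 1)) (M k) (fun a b => (hMpos (k + 1) a b).le) (hMpos k) i j)
  -- boundedness
  have hDle1 : ∀ i j, D i j ≤ 1 := by
    intro i j
    have h1 : D i j ≤ ∑ j', D i j' :=
      Finset.single_le_sum (fun j' _ => hDnn i j') (Finset.mem_univ j)
    rwa [hDrow i] at h1
  set R : ℝ := (1 + Real.sqrt (B + 3)) ^ 2 with hRdef
  have hMle : ∀ K, ∀ i j : Fin n, M K i j ≤ R := by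
    intro K i j
    apply le_of_phiB_le (hDnn i j) (hDle1 i j) (hMpos K i j)
    calc phiB (D i j) (M K i j) ≤ bregmanD n D (M K) :=
          phiB_le_bregmanD n D (M K) hDnn (hMpos K) i j
      _ ≤ B := by
          have h1 := htel D hDC K
          have h2 := hSKnn K
          linarith
  -- compactness and subsequence
  set s : Set (Fin n → Fin n → ℝ) :=
    Set.pi Set.univ fun _ => Set.pi Set.univ fun _ => Set.Icc (0 : ℝ) R with hsdef
  have hcomp : IsCompact s :=
    isCompact_univ_pi fun _ => isCompact_univ_pi fun _ => isCompact_Icc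
  have hmem_s : ∀ k, M (3 * k + 3) ∈ s := fun k =>
    Set.mem_univ_pi.2 fun i => Set.mem_univ_pi.2 fun j =>
      ⟨(hMpos _ i j).le, hMle _ i j⟩
  obtain ⟨Mstar, hMstar_s, φ, hφmono, hφtend⟩ := hcomp.tendsto_subseq hmem_s
  have hMstar_nn : ∀ i j : Fin n, 0 ≤ Mstar i j := fun i j =>
    (Set.mem_univ_pi.1 (Set.mem_univ_pi.1 hMstar_s i) j).1
  have hφat : Tendsto φ atTop atTop := hφmono.tendsto_atTop
  have hv3 : Tendsto (fun k => 3 * φ k + 3) atTop atTop :=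
    tendsto_atTop_mono (fun k => by omega) hφat
  have h3 : Tendsto (fun k => M (3 * φ k + 3)) atTop (nhds Mstar) := hφtend
  -- shifting a convergent subsequence by one
  have hnext : ∀ (v : ℕ → ℕ) (A : Fin n → Fin n → ℝ), (∀ i j, 0 ≤ A i j) →
      Tendsto v atTop atTop → Tendsto (fun k => M (v k)) atTop (nhds A) →
      Tendsto (fun k => M (v k + 1)) atTop (nhds A) := by
    intro v A hAnn hv hMv
    rw [tendsto_pi_nhds]
    intro i
    rw [tendsto_pi_nhds]
    intro j
    have hsqv : Tendsto (fun k => Real.sqrt (M (v k) i j)) atTop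
        (nhds (Real.sqrt (A i j))) :=
      (Real.continuous_sqrt.tendsto _).comp (tendsto_entry hMv i j)
    have ht : Tendsto (fun k => Real.sqrt (M (v k + 1) i j) - Real.sqrt (M (v k) i j))
        atTop (nhds 0) := (hsq0 i j).comp hv
    have hsum2 := ht.add hsqv
    rw [zero_add] at hsum2
    have he : (fun k => (Real.sqrt (M (v k + 1) i j) - Real.sqrt (M (v k) i j))
        + Real.sqrt (M (v k) i j)) = fun k => Real.sqrt (M (v k + 1) i j) :=
      funext fun k => by ring
    rw [he] at hsum2
    exact sqrt_recover (hAnn i j) (fun k => (hMpos _ i j).le) hsum2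
  have h4 : Tendsto (fun k => M (3 * φ k + 3 + 1)) atTop (nhds Mstar) :=
    hnext _ Mstar hMstar_nn hv3 h3
  have h5 : Tendsto (fun k => M (3 * φ k + 3 + 1 + 1)) atTop (nhds Mstar) :=
    hnext _ Mstar hMstar_nn (tendsto_atTop_mono (fun k => Nat.le_succ _) hv3) h4
  -- memberships of the subsequences
  have hm3 : ∀ k : ℕ, M (3 * k + 3) ∈ sinkC3 n x := by
    intro k
    have h := (hstep (3 * k + 2)).1
    rw [sinkCk_eq_C3 (by omega)] at h
    have he : 3 * k + 2 + 1 = 3 * k + 3 := by omega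
    rwa [he] at h
  have hm4 : ∀ k : ℕ, M (3 * k + 3 + 1) ∈ sinkC1 n := by
    intro k
    have h := (hstep (3 * k + 3)).1
    rwa [sinkCk_eq_C1 (by omega)] at h
  have hm5 : ∀ k : ℕ, M (3 * k + 3 + 1 + 1) ∈ sinkC2 n := by
    intro k
    have h := (hstep (3 * k + 3 + 1)).1
    rwa [sinkCk_eq_C2 (by omega)] at h
  have hMstarC : Mstar ∈ C := by
    refine ⟨⟨mem_sinkC1_of_tendsto (fun k => hm4 (φ k)) h4,
      mem_sinkC2_of_tendsto (fun k => hm5 (φ k)) h5⟩,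
      mem_sinkC3_of_tendsto (fun k => hm3 (φ k)) h3⟩
  -- D(Mstar, M_{3φk+3}) → 0
  have hDMstar0 : Tendsto (fun k => bregmanD n Mstar (M (3 * φ k + 3))) atTop (nhds 0) := by
    have hterm : ∀ i j : Fin n,
        Tendsto (fun k => phiB (Mstar i j) (M (3 * φ k + 3) i j)) atTop (nhds 0) := by
      intro i j
      have hmk := tendsto_entry h3 i j
      rcases eq_or_lt_of_le (hMstar_nn i j) with h0 | h0
      · have he : (fun k => phiB (Mstar i j) (M (3 * φ k + 3) i j))
            = fun k => M (3 * φ k + 3) i j :=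
          funext fun k => by rw [← h0]; exact phiB_zero_left _
        rw [he]
        rw [← h0] at hmk
        exact hmk
      · have hlog : Tendsto (fun k => Real.log (M (3 * φ k + 3) i j)) atTop
            (nhds (Real.log (Mstar i j))) :=
          ((Real.continuousAt_log h0.ne').tendsto).comp hmk
        have hfull := ((tendsto_const_nhds (x := Mstar i j * Real.log (Mstar i j))).sub
          (hlog.const_mul (Mstar i j))).sub
          (tendsto_const_nhds (x := Mstar i j)) |>.add hmk
        have hval : Mstar i j * Real.log (Mstar i j)
            - Mstar i j * Real.log (Mstar i j) - Mstar i j + Mstar i j = 0 := by ring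
        rw [hval] at hfull
        exact hfull
    have hsum3 := tendsto_finset_sum (Finset.univ : Finset (Fin n × Fin n))
      (fun p _ => hterm p.1 p.2)
    have he : (fun k => bregmanD n Mstar (M (3 * φ k + 3)))
        = fun k => ∑ p : Fin n × Fin n, phiB (Mstar p.1 p.2) (M (3 * φ k + 3) p.1 p.2) :=
      funext fun k => bregmanD_eq_prod n Mstar (M (3 * φ k + 3))
    rw [he]
    simpa using hsum3
  have hSval : bregmanD n Mstar (M 0) = S := by
    have h1 : Tendsto (fun k => bregmanD n Mstar (M (3 * φ k + 3)) + SK (3 * φ k + 3))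
        atTop (nhds (0 + S)) := hDMstar0.add (hSKtend.comp hv3)
    rw [zero_add] at h1
    have h2 : (fun k => bregmanD n Mstar (M (3 * φ k + 3)) + SK (3 * φ k + 3))
        = fun _ => bregmanD n Mstar (M 0) := funext fun k => (htel Mstar hMstarC _).symm
    rw [h2] at h1
    exact tendsto_nhds_unique tendsto_const_nhds h1
  -- full convergence
  have hbz : ∀ L, L ∈ C → bregmanD n L (M 0) = S → Tendsto M atTop (nhds L) := by
    intro L hL hLS
    apply tendsto_of_bregman_to_zero (hL.1.1.1) hMpos
    have h1 : (fun K => bregmanD n L (M K)) = fun K => S - SK K :=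
      funext fun K => by have := htel L hL K; linarith
    rw [h1]
    have h2 := (tendsto_const_nhds (x := S)).sub hSKtend
    rwa [sub_self] at h2
  have hMtend : Tendsto M atTop (nhds Mstar) := hbz Mstar hMstarC hSval
  -- entropy identities
  have hHD : ∀ L : Fin n → Fin n → ℝ, (∀ i, ∑ j, L i j = 1) →
      bregmanD n L (M 0) = entropyH n L + ((n : ℝ) * n - n) := by
    intro L hrow
    rw [hM0]
    simp only [bregmanD, entropyH, Real.log_one, mul_zero, sub_zero]
    have hinner : ∀ i, ∑ j, (L i j * Real.log (L i j) - L i j + 1)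
        = (∑ j, L i j * Real.log (L i j)) + ((n : ℝ) - 1) := by
      intro i
      have h1 : ∀ j : Fin n, L i j * Real.log (L i j) - L i j + 1
          = (L i j * Real.log (L i j) - L i j) + 1 := fun j => by ring
      rw [Finset.sum_congr rfl fun j _ => h1 j, Finset.sum_add_distrib,
        Finset.sum_sub_distrib, hrow i, Finset.sum_const, Finset.card_univ,
        Fintype.card_fin, nsmul_eq_mul, mul_one]
      ring
    rw [Finset.sum_congr rfl fun i _ => hinner i, Finset.sum_add_distrib,
      Finset.sum_const, Finset.card_univ, Fintype.card_fin, nsmul_eq_mul]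
    ring
  have hSmin : ∀ L ∈ C, S ≤ bregmanD n L (M 0) := by
    intro L hL
    refine le_of_tendsto hSKtend (Filter.Eventually.of_forall fun K => ?_)
    have h1 := htel L hL K
    have h2 := bregmanD_nonneg (hL.1.1.1) (hMpos K)
    linarith
  have hmin1 : ∀ L ∈ C, entropyH n Mstar ≤ entropyH n L := by
    intro L hL
    have h1 := hSmin L hL
    have h2 := hHD L hL.1.1.2
    have h3 := hHD Mstar hMstarC.1.1.2
    rw [hSval] at h3
    linarith
  refine ⟨Mstar, hMstarC, hmin1, ?_, hMtend⟩
  intro L hL hLmin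
  have h1 : entropyH n L = entropyH n Mstar :=
    le_antisymm (hLmin Mstar hMstarC) (hmin1 L hL)
  have h2 : bregmanD n L (M 0) = S := by
    have ha := hHD L hL.1.1.2
    have hb := hHD Mstar hMstarC.1.1.2
    rw [hSval] at hb
    rw [ha, h1]
    linarith
  exact tendsto_nhds_unique (hbz L hL h2) hMtend
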